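/- Let λ > 0, let B_0 be a λ-contractive-set CBF (i.e., min_{u∈U} B_0(f(x,u)) ≤ −λ for all x ∈ S_{B_0}) satisfying h(x) + kλ ≤ B_0(x) for all x ∈ S_{B_0}, and define B_k(x) as the minimum over input sequences in U^k of max{ max_{0 ≤ t ≤ k-1} (h(x_t) + tλ), B_0(x_k) }. Then B_k is a λ-contractive-set CBF for the original constraint: h(x) ≤ 0 for all x with B_k(x) ≤ 0, and for all such x there exists u ∈ U with B_k(f(x,u)) ≤ −λ. -/

import Mathlib

/-- Closed-loop trajectory: x_0 = x, x_{t+1} = f(x_t, u_t). -/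
def traj {σ υ : Type*} (f : σ → υ → σ) (x : σ) (u : ℕ → υ) : ℕ → σ
  | 0 => x
  | t + 1 => f (traj f x u t) (u t)

/-- Cost max{ max_{0 ≤ t ≤ k-1} (h(x_t) + t·λ), B_0(x_k) }. -/
noncomputable def reachCostContr {σ υ : Type*} (f : σ → υ → σ) (h B0 : σ → ℝ)
    (lam : ℝ) (k : ℕ) (x : σ) (u : ℕ → υ) : ℝ :=
  max (⨆ t : Fin k, (h (traj f x u t) + (t : ℕ) * lam)) (B0 (traj f x u k))

/-!
If the optimal input `u` for `x` certifies `B_k x ≤ 0`, then every stage `h(x_t) + tλ` with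
`t < k` is nonpositive, and so is `h(x_k) + kλ ≤ B_0(x_k) ≤ 0` by the tightened terminal
condition. Append to `u` an input `w` with `B_0(f(x_k, w)) ≤ -λ` and drop its first entry:
from `f(x, u_0)` the stage index of every state drops by one, so each stage costs `≤ -λ`,
and the new terminal cost is `B_0(f(x_k, w)) ≤ -λ`.
-/

section Trajectory

variable {σ υ : Type*} {f : σ → υ → σ} {x : σ} {u v : ℕ → υ}

theorem traj_shift (t : ℕ) :
    traj f (f x (u 0)) (fun s => u (s + 1)) t = traj f x u (t + 1) := by
  induction t with
  | zero => rfl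
  | succ t ih => simp only [traj] at ih ⊢; rw [ih]

theorem traj_congr {t : ℕ} (huv : ∀ s < t, u s = v s) : traj f x u t = traj f x v t := by
  induction t with
  | zero => rfl
  | succ t ih =>
    simp only [traj]
    rw [ih fun s hs => huv s (Nat.lt_succ_of_lt hs), huv t (Nat.lt_succ_self t)]

theorem traj_update_of_le {k t : ℕ} (w : υ) (ht : t ≤ k) :
    traj f x (Function.update u k w) t = traj f x u t :=
  traj_congr fun _ hs => Function.update_of_ne (by omega) _ _

theorem traj_update_succ (k : ℕ) (w : υ) :
    traj f x (Function.update u k w) (k + 1) = f (traj f x u k) w := by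
  simp only [traj, traj_update_of_le w le_rfl, Function.update_self]

end Trajectory

section ReachCost

variable {σ υ : Type*} {f : σ → υ → σ} {h B0 : σ → ℝ} {lam : ℝ} {k : ℕ} {x : σ} {u : ℕ → υ}

theorem reachCostContr_le_iff (hk : 0 < k) {c : ℝ} :
    reachCostContr f h B0 lam k x u ≤ c ↔
      (∀ t : Fin k, h (traj f x u t) + (t : ℕ) * lam ≤ c) ∧ B0 (traj f x u k) ≤ c := by
  have : Nonempty (Fin k) := ⟨⟨0, hk⟩⟩
  rw [reachCostContr, max_le_iff, ciSup_le_iff (Set.finite_range _).bddAbove]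

theorem reachCostContr_shift_le (hk : 0 < k)
    (hstage : ∀ t ≤ k, h (traj f x u t) + t * lam ≤ 0)
    (hnext : B0 (traj f x u (k + 1)) ≤ -lam) :
    reachCostContr f h B0 lam k (f x (u 0)) (fun t => u (t + 1)) ≤ -lam := by
  rw [reachCostContr_le_iff hk, traj_shift]
  refine ⟨fun t => ?_, hnext⟩
  have := hstage (t + 1) t.isLt
  rw [traj_shift]
  push_cast at this
  linarith

end ReachCost

theorem reachability_generates_contractive_cbf_general
    {σ υ : Type*} (f : σ → υ → σ) (h : σ → ℝ) (U : Set υ) (B0 : σ → ℝ)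
    (lam : ℝ) (k : ℕ) (hk : 1 ≤ k)
    -- B_0 is a λ-contractive-set CBF with the strengthened condition:
    (hSB0_tight : ∀ x, B0 x ≤ 0 → h x + (k : ℝ) * lam ≤ B0 x)
    (hSB0_contr : ∀ x, B0 x ≤ 0 → ∃ u ∈ U, B0 (f x u) ≤ -lam)
    -- B_k is the attained minimum of the reachability cost:
    (Bk : σ → ℝ)
    (hBk_att : ∀ x : σ, ∃ u : ℕ → υ, (∀ t, u t ∈ U) ∧
      Bk x = reachCostContr f h B0 lam k x u)
    (hBk_lb : ∀ (x : σ) (u : ℕ → υ), (∀ t, u t ∈ U) →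
      Bk x ≤ reachCostContr f h B0 lam k x u) :
    ∀ x, Bk x ≤ 0 → h x ≤ 0 ∧ ∃ u ∈ U, Bk (f x u) ≤ -lam := by
  intro x hx
  obtain ⟨u, hu, hBkx⟩ := hBk_att x
  obtain ⟨hstage, hterm⟩ := (reachCostContr_le_iff hk).1 (hBkx ▸ hx)
  refine ⟨by simpa [traj] using hstage ⟨0, hk⟩, ?_⟩
  obtain ⟨w, hw, hcontr⟩ := hSB0_contr _ hterm
  set u' := Function.update u k w
  have hu' : ∀ t, u' t ∈ U :=
    (Function.forall_update_iff u (p := fun _ v => v ∈ U)).2 ⟨hw, fun t _ => hu t⟩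
  have hstage' : ∀ t ≤ k, h (traj f x u' t) + t * lam ≤ 0 := fun t ht => by
    rw [traj_update_of_le w ht]
    rcases ht.lt_or_eq with ht | rfl
    · exact hstage ⟨t, ht⟩
    · exact (hSB0_tight _ hterm).trans hterm
  refine ⟨u' 0, hu' 0, (hBk_lb _ _ fun t => hu' (t + 1)).trans ?_⟩
  exact reachCostContr_shift_le hk hstage' (by rwa [traj_update_succ])

/-- if λ > 0 and B_0 is a λ-contractive-set CBF with
h + kλ ≤ B_0 on S_{B_0}, then B_k (the attained minimum of the reachability
cost with linearly increasing tightening) is a λ-contractive-set CBF for the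
original constraint. -/
theorem reachability_generates_contractive_cbf
    {σ υ : Type*} (f : σ → υ → σ) (h : σ → ℝ) (U : Set υ) (B0 : σ → ℝ)
    (lam : ℝ) (hlam : 0 < lam) (k : ℕ) (hk : 1 ≤ k)
    -- B_0 is a λ-contractive-set CBF with the strengthened condition:
    (hSB0_ne : {x : σ | B0 x ≤ 0}.Nonempty)
    (hSB0_tight : ∀ x, B0 x ≤ 0 → h x + (k : ℝ) * lam ≤ B0 x)
    (hSB0_contr : ∀ x, B0 x ≤ 0 → ∃ u ∈ U, B0 (f x u) ≤ -lam)
    -- B_k is the attained minimum of the reachability cost: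
    (Bk : σ → ℝ)
    (hBk_att : ∀ x : σ, ∃ u : ℕ → υ, (∀ t, u t ∈ U) ∧
      Bk x = reachCostContr f h B0 lam k x u)
    (hBk_lb : ∀ (x : σ) (u : ℕ → υ), (∀ t, u t ∈ U) →
      Bk x ≤ reachCostContr f h B0 lam k x u) :
    ∀ x, Bk x ≤ 0 → h x ≤ 0 ∧ ∃ u ∈ U, Bk (f x u) ≤ -lam :=
  reachability_generates_contractive_cbf_general f h U B0 lam k hk hSB0_tight hSB0_contr Bk hBk_att
    hBk_lb
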